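/- arXiv:2002.06418 — 2 statements merged into one kernel-verified Lean document; each statement's English description precedes it below -/
import Mathlib

section
/- Let P be a convex polytope in ℝ³ with nonempty interior, and let C be the union of all facets of P whose outward unit normals n satisfy ⟨n, e₃⟩ > 0 (the 'jagged convex cap' with φ = 90°). Then C is homeomorphic to a closed disk in ℝ². -/
open scoped RealInnerProductSpace

noncomputable section

abbrev E3 := EuclideanSpace ℝ (Fin 3)
abbrev E2 := EuclideanSpace ℝ (Fin 2)

/-- The vertical direction `e₃ = (0,0,1)`. -/
def e3 : E3 := EuclideanSpace.single 2 1

/-- Vertical projection `(x,y,z) ↦ (x,y)`. -/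
def projXY (p : E3) : E2 := WithLp.toLp 2 (fun i : Fin 2 => p (Fin.castLE (by norm_num) i))

/-- A (compact convex) polytope: the convex hull of finitely many points. -/
def IsPolytope (P : Set E3) : Prop := ∃ S : Finset E3, P = convexHull ℝ (S : Set E3)

/-- `F` is a face of `P`: the intersection of `P` with a supporting hyperplane. -/
def IsFace (P F : Set E3) : Prop :=
  ∃ n : E3, ∃ c : ℝ, n ≠ 0 ∧ (∀ x ∈ P, ⟪n, x⟫ ≤ c) ∧ F = {x ∈ P | ⟪n, x⟫ = c}

/-- A facet is a 2-dimensional face. -/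
def IsFacet (P F : Set E3) : Prop := IsFace P F ∧ Module.finrank ℝ (vectorSpan ℝ F) = 2

/-- `n` is an outward unit normal exhibiting `F` as a facet of `P`. -/
def IsFacetNormal (P F : Set E3) (n : E3) : Prop :=
  ‖n‖ = 1 ∧ ∃ c : ℝ, (∀ x ∈ P, ⟪n, x⟫ ≤ c) ∧ F = {x ∈ P | ⟪n, x⟫ = c} ∧
    Module.finrank ℝ (vectorSpan ℝ F) = 2

/-- The jagged convex cap (φ = 90°): union of all facets whose outward
unit normal `n` satisfies `⟪n, e₃⟫ > 0`. -/
def cap (P : Set E3) : Set E3 :=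
  {x | ∃ F n, IsFacetNormal P F n ∧ 0 < ⟪n, e3⟫ ∧ x ∈ F}

/-- `v` is a vertex of `P`: a 0-dimensional face. -/
def IsVertex (P : Set E3) (v : E3) : Prop := IsFace P {v}

/-- The interior angle of a planar convex set `F` at a vertex `v`:
the supremum of angles subtended at `v` by pairs of points of `F`. -/
def faceAngle (F : Set E3) (v : E3) : ℝ :=
  sSup {θ | ∃ a ∈ F, ∃ b ∈ F, θ = InnerProductGeometry.angle (a - v) (b - v)}

/-- The sum of the face angles at `v` of the facets of `P` incident to `v`. -/
def angleSum (P : Set E3) (v : E3) : ℝ :=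
  ∑ᶠ F ∈ {F | IsFacet P F ∧ v ∈ F}, faceAngle F v

/-- A (possibly unbounded) polyhedron: a finite intersection of closed half-spaces. -/
def IsPolyhedron (Q : Set E3) : Prop :=
  ∃ s : Finset (E3 × ℝ), Q = ⋂ p ∈ s, {x | ⟪p.1, x⟫ ≤ p.2}

/-- `Q` contains a (full) line. -/
def ContainsLine (Q : Set E3) : Prop :=
  ∃ x u : E3, u ≠ 0 ∧ ∀ t : ℝ, x + t • u ∈ Q

/-- The recession cone of `Q`. -/
def recCone (Q : Set E3) : Set E3 :=
  {u | ∀ x ∈ Q, ∀ t : ℝ, 0 ≤ t → x + t • u ∈ Q}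

/-- The spherical image of a closed convex set: outward unit normals of
supporting planes. -/
def sphImage (C : Set E3) : Set E3 :=
  {n | ‖n‖ = 1 ∧ ∃ x ∈ C, ∀ y ∈ C, ⟪n, y - x⟫ ≤ 0}

/-- The spherical image of `P` at the point `v`: unit normals of supporting
planes touching `P` at `v`. -/
def vertexSphImage (P : Set E3) (v : E3) : Set E3 :=
  {n | ‖n‖ = 1 ∧ ∀ x ∈ P, ⟪n, x - v⟫ ≤ 0}

/-- 2-dimensional (spherical) Hausdorff measure on `ℝ³`. -/
def sphMeasure : MeasureTheory.Measure E3 := MeasureTheory.Measure.hausdorffMeasure 2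

/-!
Every point of the cap is the highest point of `P` on its vertical line, because the facet
through it has an upward normal; so the vertical projection is injective on the cap. Conversely,
over a point `q` of the interior, the highest point `p` of `P` is a boundary point, and every
supporting plane at `p` has an upward normal since `q` lies strictly below it. Tilting such a
plane about its face until it meets another vertex raises the dimension of the face, so some
supporting plane at `p` cuts out a facet, and `p` lies in the cap. The image of the compact cap
is closed and contains the dense projection of the interior, so the projection maps the cap
homeomorphically onto the projection of `P`: a compact convex planar set with nonempty interior,
hence a closed disk.
-/

open Module Set Filter Topology

theorem exists_pos_add_smul_mem_of_mem_interior {E : Type*} [AddCommGroup E] [Module ℝ E]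
    [TopologicalSpace E] [ContinuousAdd E] [ContinuousSMul ℝ E] {P : Set E} {q : E}
    (hq : q ∈ interior P) (v : E) : ∃ δ > (0 : ℝ), q + δ • v ∈ P := by
  have hcont : Tendsto (fun δ : ℝ => q + δ • v) (𝓝[>] 0) (𝓝 q) := by
    have : Continuous fun δ : ℝ => q + δ • v := by fun_prop
    simpa using tendsto_nhdsWithin_of_tendsto_nhds (this.tendsto 0)
  obtain ⟨δ, hδP, hδ⟩ :=
    ((hcont.eventually (mem_interior_iff_mem_nhds.1 hq)).and self_mem_nhdsWithin).exists
  exact ⟨δ, hδ, hδP⟩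

section SupportFace

variable {E : Type*} [NormedAddCommGroup E] [InnerProductSpace ℝ E]

def supportFace (P : Set E) (m : E) : Set E :=
  {x ∈ P | ∀ y ∈ P, ⟪m, y⟫ ≤ ⟪m, x⟫}

theorem supportFace_eq_of_mem {P : Set E} {m p : E} (hp : p ∈ supportFace P m) :
    supportFace P m = {y ∈ P | ⟪m, y⟫ = ⟪m, p⟫} := by
  ext y
  refine ⟨fun hy => ⟨hy.1, (hp.2 y hy.1).antisymm (hy.2 p hp.1)⟩, fun hy => ⟨hy.1, ?_⟩⟩
  simpa only [hy.2] using hp.2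

theorem supportFace_smul {P : Set E} {c : ℝ} (hc : 0 < c) (m : E) :
    supportFace P (c • m) = supportFace P m := by
  ext x
  simp only [supportFace, mem_sep_iff, real_inner_smul_left, mul_le_mul_iff_right₀ hc]

theorem isExposed_supportFace (P : Set E) (m : E) : IsExposed ℝ P (supportFace P m) :=
  fun _ => ⟨innerSL ℝ m, rfl⟩

theorem mem_supportFace_convexHull_iff {S : Set E} {m p : E} (hp : p ∈ convexHull ℝ S) :
    p ∈ supportFace (convexHull ℝ S) m ↔ ∀ s ∈ S, ⟪m, s⟫ ≤ ⟪m, p⟫ := by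
  refine ⟨fun h s hs => h.2 s (subset_convexHull ℝ S hs), fun h => ⟨hp, fun y hy => ?_⟩⟩
  exact convexHull_min h (convex_halfSpace_le (innerₛₗ ℝ m).isLinear _) hy

theorem finrank_vectorSpan_supportFace_lt [FiniteDimensional ℝ E] (P : Set E) {m : E}
    (hm : m ≠ 0) : finrank ℝ (vectorSpan ℝ (supportFace P m)) < finrank ℝ E := by
  have hle : vectorSpan ℝ (supportFace P m) ≤ (ℝ ∙ m)ᗮ := by
    rw [vectorSpan_def, Submodule.span_le]
    rintro _ ⟨a, ha, b, hb, rfl⟩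
    rw [SetLike.mem_coe, Submodule.mem_orthogonal_singleton_iff_inner_right]
    change ⟪m, a - b⟫ = 0
    rw [inner_sub_right, (ha.2 b hb.1).antisymm (hb.2 a ha.1), sub_self]
  have hne : (ℝ ∙ m)ᗮ ≠ ⊤ := fun h => hm <| inner_self_eq_zero.1 <|
    (Submodule.mem_orthogonal_singleton_iff_inner_right.1 (h ▸ Submodule.mem_top (x := m)))
  exact (Submodule.finrank_mono hle).trans_lt (Submodule.finrank_lt hne)

theorem exists_mem_orthogonal_inner_sub_pos [FiniteDimensional ℝ E] {S : Set E}
    (hS : affineSpan ℝ S = ⊤) {V : Submodule ℝ E} (hV : V ≠ ⊤) (p : E) :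
    ∃ u ∈ Vᗮ, ∃ s ∈ S, 0 < ⟪u, s - p⟫ := by
  obtain ⟨u, hu, hu0⟩ := Submodule.exists_mem_ne_zero_of_ne_bot
    (mt Submodule.orthogonal_eq_bot_iff.1 hV)
  by_contra! h
  have hS_sub : S ⊆ AffineSubspace.mk' p (ℝ ∙ u)ᗮ := fun s hs => by
    rw [SetLike.mem_coe, AffineSubspace.mem_mk', vsub_eq_sub,
      Submodule.mem_orthogonal_singleton_iff_inner_right]
    refine (h u hu s hs).antisymm ?_
    simpa [inner_neg_left] using h (-u) (V.orthogonal.neg_mem hu) s hs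
  have hpu : p + u ∈ AffineSubspace.mk' p (ℝ ∙ u)ᗮ :=
    (hS ▸ affineSpan_le_of_subset_coe hS_sub) (AffineSubspace.mem_top ℝ E _)
  rw [AffineSubspace.mem_mk', vsub_eq_sub, add_sub_cancel_left,
    Submodule.mem_orthogonal_singleton_iff_inner_right] at hpu
  exact hu0 (inner_self_eq_zero.1 hpu)

/-- `t` is the first time the hyperplane tilted towards `u` meets a further point of `S`. -/
theorem exists_tilt_mem_supportFace_convexHull {S : Finset E} {m p u s₀ : E}
    (hp : p ∈ supportFace (convexHull ℝ (S : Set E)) m)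
    (hbelow : ∀ s ∈ S, 0 < ⟪u, s - p⟫ → ⟪m, s⟫ < ⟪m, p⟫) (hs₀ : s₀ ∈ S)
    (hus₀ : 0 < ⟪u, s₀ - p⟫) :
    ∃ t > (0 : ℝ), ∃ s₁ ∈ S, 0 < ⟪u, s₁ - p⟫ ∧ ⟪m + t • u, s₁⟫ = ⟪m + t • u, p⟫ ∧
      p ∈ supportFace (convexHull ℝ (S : Set E)) (m + t • u) := by
  classical
  obtain ⟨s₁, hs₁, hmin⟩ := (S.filter fun s => 0 < ⟪u, s - p⟫).exists_min_image
    (fun s => (⟪m, p⟫ - ⟪m, s⟫) / ⟪u, s - p⟫) ⟨s₀, Finset.mem_filter.2 ⟨hs₀, hus₀⟩⟩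
  rw [Finset.mem_filter] at hs₁
  set t := (⟪m, p⟫ - ⟪m, s₁⟫) / ⟪u, s₁ - p⟫
  have htilt :
      ∀ y, ⟪m + t • u, y⟫ - ⟪m + t • u, p⟫ = ⟪m, y⟫ - ⟪m, p⟫ + t * ⟪u, y - p⟫ := by
    intro y
    simp only [inner_add_left, real_inner_smul_left, inner_sub_right]
    ring
  have ht : 0 < t := div_pos (sub_pos.2 (hbelow _ hs₁.1 hs₁.2)) hs₁.2
  refine ⟨t, ht, s₁, hs₁.1, hs₁.2, ?_, ?_⟩
  · have : t * ⟪u, s₁ - p⟫ = ⟪m, p⟫ - ⟪m, s₁⟫ := div_mul_cancel₀ _ hs₁.2.ne'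
    linarith [htilt s₁]
  rw [mem_supportFace_convexHull_iff hp.1]
  intro s hs
  rcases le_or_gt ⟪u, s - p⟫ 0 with hle | hgt
  · nlinarith [htilt s, hp.2 s (subset_convexHull ℝ _ hs)]
  · have := (le_div_iff₀ hgt).1 (hmin s (Finset.mem_filter.2 ⟨hs, hgt⟩))
    linarith [htilt s]

theorem exists_supportFace_convexHull_gt {S : Finset E} {m p u s₀ : E}
    (hp : p ∈ supportFace (convexHull ℝ (S : Set E)) m)
    (hu : u ∈ (vectorSpan ℝ (supportFace (convexHull ℝ (S : Set E)) m) ⊔ ℝ ∙ m)ᗮ)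
    (hs₀ : s₀ ∈ S) (hus₀ : 0 < ⟪u, s₀ - p⟫) :
    ∃ m' ≠ 0, p ∈ supportFace (convexHull ℝ (S : Set E)) m' ∧
      vectorSpan ℝ (supportFace (convexHull ℝ (S : Set E)) m) <
        vectorSpan ℝ (supportFace (convexHull ℝ (S : Set E)) m') := by
  set P := convexHull ℝ (S : Set E)
  have hum : ⟪u, m⟫ = 0 := Submodule.inner_left_of_mem_orthogonal
    (Submodule.mem_sup_right (Submodule.mem_span_singleton_self m)) hu
  have huF : ∀ y ∈ supportFace P m, ⟪u, y - p⟫ = 0 := fun y hy =>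
    Submodule.inner_left_of_mem_orthogonal
      (Submodule.mem_sup_left (vsub_mem_vectorSpan ℝ hy hp)) hu
  have hbelow : ∀ s ∈ S, 0 < ⟪u, s - p⟫ → ⟪m, s⟫ < ⟪m, p⟫ := fun s hs hpos =>
    (hp.2 s (subset_convexHull ℝ _ hs)).lt_of_ne fun h =>
      hpos.ne' (huF s ⟨subset_convexHull ℝ _ hs, fun y hy => h ▸ hp.2 y hy⟩)
  obtain ⟨t, ht, s₁, hs₁, hus₁, hts₁, hp'⟩ :=
    exists_tilt_mem_supportFace_convexHull hp hbelow hs₀ hus₀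
  have hne : m + t • u ≠ 0 := by
    intro h
    have hu0 : u = 0 := by
      simpa [inner_add_right, real_inner_smul_right, hum, ht.ne'] using congrArg (⟪u, ·⟫) h
    simp [hu0] at hus₀
  have hsub : supportFace P m ⊆ supportFace P (m + t • u) := by
    intro y hy
    rw [supportFace_eq_of_mem hp']
    refine ⟨hy.1, ?_⟩
    have hmy : ⟪m, y⟫ = ⟪m, p⟫ := (supportFace_eq_of_mem hp ▸ hy).2
    have huy : ⟪u, y⟫ = ⟪u, p⟫ := by rw [← sub_eq_zero, ← inner_sub_right]; exact huF y hy
    simp only [inner_add_left, real_inner_smul_left, hmy, huy]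
  have hs₁' : s₁ ∈ supportFace P (m + t • u) := by
    rw [supportFace_eq_of_mem hp']
    exact ⟨subset_convexHull ℝ _ hs₁, hts₁⟩
  refine ⟨_, hne, hp', (vectorSpan_mono ℝ hsub).lt_of_ne fun h => hus₁.ne' ?_⟩
  have : s₁ - p ∈ vectorSpan ℝ (supportFace P m) := h ▸ vsub_mem_vectorSpan ℝ hs₁' hp'
  exact Submodule.inner_left_of_mem_orthogonal (Submodule.mem_sup_left this) hu

theorem exists_finrank_vectorSpan_supportFace_add_one_eq [FiniteDimensional ℝ E]
    {S : Finset E} (hS : affineSpan ℝ (S : Set E) = ⊤) {m p : E} (hm : m ≠ 0)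
    (hp : p ∈ supportFace (convexHull ℝ (S : Set E)) m) :
    ∃ n ≠ 0, p ∈ supportFace (convexHull ℝ (S : Set E)) n ∧
      finrank ℝ (vectorSpan ℝ (supportFace (convexHull ℝ (S : Set E)) n)) + 1 = finrank ℝ E := by
  set P := convexHull ℝ (S : Set E)
  -- a supporting normal at `p` whose face has the largest dimension
  obtain ⟨n, ⟨hn, hpn⟩, hmax⟩ := (measure fun n =>
      finrank ℝ E - finrank ℝ (vectorSpan ℝ (supportFace P n))).wf.has_min
    {n | n ≠ 0 ∧ p ∈ supportFace P n} ⟨m, hm, hp⟩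
  refine ⟨n, hn, hpn, le_antisymm (finrank_vectorSpan_supportFace_lt P hn) ?_⟩
  by_contra! hlt
  have hV : vectorSpan ℝ (supportFace P n) ⊔ ℝ ∙ n ≠ ⊤ := by
    intro h
    have := Submodule.finrank_add_le_finrank_add_finrank
      (vectorSpan ℝ (supportFace P n)) (ℝ ∙ n)
    rw [h, finrank_top, finrank_span_singleton hn] at this
    omega
  obtain ⟨u, hu, s, hs, hus⟩ := exists_mem_orthogonal_inner_sub_pos hS hV p
  obtain ⟨n', hn', hpn', hgt⟩ := exists_supportFace_convexHull_gt hpn hu hs hus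
  exact hmax n' ⟨hn', hpn'⟩
    (Nat.sub_lt_sub_left (by omega) (Submodule.finrank_lt_finrank_of_lt hgt))

theorem inner_lt_of_mem_interior_of_mem_supportFace {P : Set E} {m p q : E} (hm : m ≠ 0)
    (hp : p ∈ supportFace P m) (hq : q ∈ interior P) : ⟪m, q⟫ < ⟪m, p⟫ := by
  obtain ⟨δ, hδ, hqδ⟩ := exists_pos_add_smul_mem_of_mem_interior hq m
  have := hp.2 _ hqδ
  rw [inner_add_right, real_inner_smul_right, real_inner_self_eq_norm_sq] at this
  have : 0 < δ * ‖m‖ ^ 2 := by positivity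
  linarith

theorem exists_ne_zero_mem_supportFace [CompleteSpace E] {P : Set E} (hPc : Convex ℝ P)
    (hPi : (interior P).Nonempty) {p : E} (hp : p ∈ P) (hpi : p ∉ interior P) :
    ∃ m ≠ 0, p ∈ supportFace P m := by
  obtain ⟨f, u, hf, hfP, hfp⟩ := geometric_hahn_banach_of_nonempty_interior hPc
    (convex_singleton p) (disjoint_singleton_right.2 hpi) hPi (singleton_nonempty p)
  refine ⟨(InnerProductSpace.toDual ℝ E).symm f, by simpa using hf, hp, fun y hy => ?_⟩
  simp only [InnerProductSpace.toDual_symm_apply]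
  exact (hfP y hy).trans (hfp p rfl)

end SupportFace

/-- Krein–Milman: the face is the closed convex hull of its extreme points, which are extreme
points of `convexHull ℝ S` and hence lie in `S`. -/
theorem IsExposed.eq_convexHull_inter {E : Type*} [NormedAddCommGroup E] [NormedSpace ℝ E]
    {S F : Set E} (hS : S.Finite) (hF : IsExposed ℝ (convexHull ℝ S) F) :
    F = convexHull ℝ (F ∩ S) := by
  have hPc := Set.Finite.isCompact_convexHull ℝ hS
  have hFc : IsCompact F := hF.isCompact hPc
  have hFconv : Convex ℝ F := hF.convex (convex_convexHull ℝ S)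
  refine subset_antisymm ?_ (convexHull_min inter_subset_left hFconv)
  have hext : F.extremePoints ℝ ⊆ F ∩ S := fun x hx =>
    ⟨hx.1, extremePoints_convexHull_subset (hF.isExtreme.extremePoints_subset_extremePoints hx)⟩
  calc F = closure (convexHull ℝ (F.extremePoints ℝ)) :=
        (closure_convexHull_extremePoints hFc hFconv).symm
    _ ⊆ closure (convexHull ℝ (F ∩ S)) := closure_mono (convexHull_mono hext)
    _ = convexHull ℝ (F ∩ S) :=
      (Set.Finite.isCompact_convexHull ℝ (hS.inter_of_right F)).isClosed.closure_eq

theorem IsCompact.nonempty_homeomorph_image {X Y : Type*} [TopologicalSpace X]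
    [TopologicalSpace Y] [T2Space Y] {s : Set X} {f : X → Y} (hs : IsCompact s)
    (hf : ContinuousOn f s) (hinj : InjOn f s) : Nonempty (s ≃ₜ f '' s) := by
  have := isCompact_iff_compactSpace.1 hs
  have he := (hf.comp_continuous continuous_subtype_val Subtype.prop).isClosedEmbedding
    hinj.injective
  exact ⟨he.isEmbedding.toHomeomorph.trans (.setCongr (range_domRestrict f s))⟩

theorem nonempty_homeomorph_closedBall_of_convex {E : Type*} [NormedAddCommGroup E]
    [NormedSpace ℝ E] {Q : Set E} (hQc : Convex ℝ Q) (hQi : (interior Q).Nonempty)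
    (hQcl : IsClosed Q) (hQb : Bornology.IsBounded Q) :
    Nonempty (Q ≃ₜ Metric.closedBall (0 : E) 1) := by
  obtain ⟨h, -, hcl, -⟩ :=
    exists_homeomorph_image_interior_closure_frontier_eq_unitBall hQc hQi hQb
  rw [hQcl.closure_eq] at hcl
  exact ⟨(h.image Q).trans (.setCongr hcl)⟩

def projXYₗ : E3 →ₗ[ℝ] E2 where
  toFun := projXY
  map_add' _ _ := rfl
  map_smul' _ _ := rfl

theorem continuous_projXY : Continuous projXY := projXYₗ.continuous_of_finiteDimensional

theorem projXY_surjective : Function.Surjective projXY := fun y =>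
  ⟨WithLp.toLp 2 ![y 0, y 1, 0], by ext i; fin_cases i <;> rfl⟩

theorem isOpenMap_projXY : IsOpenMap projXY :=
  projXYₗ.isOpenMap_of_finiteDimensional projXY_surjective

theorem projXY_add_smul_e3 (p : E3) (t : ℝ) : projXY (p + t • e3) = projXY p := by
  ext i; fin_cases i <;> simp [projXY, e3]

theorem add_smul_e3_apply_two (p : E3) (t : ℝ) : (p + t • e3) 2 = p 2 + t := by
  simp [e3]

theorem sub_eq_smul_e3_of_projXY_eq {p q : E3} (h : projXY p = projXY q) :
    p - q = (p 2 - q 2) • e3 := by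
  have h0 : p 0 = q 0 := congrArg (· 0) h
  have h1 : p 1 = q 1 := congrArg (· 1) h
  ext j
  fin_cases j <;> simp [e3, h0, h1]

theorem IsFacetNormal.eq_supportFace {P F : Set E3} {n x : E3} (h : IsFacetNormal P F n)
    (hx : x ∈ F) : F = supportFace P n := by
  obtain ⟨-, c, hc, rfl, -⟩ := h
  have hxc : ⟪n, x⟫ = c := hx.2
  rw [supportFace_eq_of_mem ⟨hx.1, fun y hy => hxc ▸ hc y hy⟩, hxc]

theorem IsFacetNormal.isExposed {P F : Set E3} {n : E3} (h : IsFacetNormal P F n) :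
    IsExposed ℝ P F := fun ⟨_, hx⟩ => by
  rw [h.eq_supportFace hx]
  exact isExposed_supportFace P n ⟨_, h.eq_supportFace hx ▸ hx⟩

theorem isFacetNormal_supportFace {P : Set E3} {n p : E3} (hn : n ≠ 0)
    (hp : p ∈ supportFace P n) (hrank : finrank ℝ (vectorSpan ℝ (supportFace P n)) = 2) :
    IsFacetNormal P (supportFace P n) (‖n‖⁻¹ • n) := by
  rw [← supportFace_smul (inv_pos.2 (norm_pos_iff.2 hn))] at hp hrank ⊢
  refine ⟨?_, _, hp.2, supportFace_eq_of_mem hp, hrank⟩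
  rw [norm_smul, norm_inv, norm_norm, inv_mul_cancel₀ (norm_ne_zero_iff.2 hn)]

theorem cap_eq_sUnion (P : Set E3) :
    cap P = ⋃₀ {F | ∃ n, IsFacetNormal P F n ∧ 0 < ⟪n, e3⟫} := by
  ext x
  simp only [cap, mem_sUnion, mem_ofPred_eq]
  grind

theorem exists_mem_supportFace_of_mem_cap {P : Set E3} {x : E3} (hx : x ∈ cap P) :
    ∃ n, 0 < ⟪n, e3⟫ ∧ x ∈ supportFace P n := by
  obtain ⟨F, n, hF, hn, hxF⟩ := hx
  exact ⟨n, hn, hF.eq_supportFace hxF ▸ hxF⟩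

theorem cap_subset (P : Set E3) : cap P ⊆ P := fun _ hx => by
  obtain ⟨_, _, hxn⟩ := exists_mem_supportFace_of_mem_cap hx
  exact hxn.1

theorem isCompact_cap (S : Finset E3) : IsCompact (cap (convexHull ℝ (S : Set E3))) := by
  set P := convexHull ℝ (S : Set E3)
  have hfin : {F | ∃ n, IsFacetNormal P F n ∧ 0 < ⟪n, e3⟫}.Finite := by
    refine (S.finite_toSet.finite_subsets.image (convexHull ℝ)).subset ?_
    rintro F ⟨n, hn, -⟩
    exact ⟨F ∩ S, inter_subset_right,
      (hn.isExposed.eq_convexHull_inter S.finite_toSet).symm⟩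
  rw [cap_eq_sUnion]
  exact hfin.isCompact_sUnion fun F ⟨n, hn, _⟩ =>
    hn.isExposed.isCompact (S.finite_toSet.isCompact_convexHull ℝ)

theorem apply_two_le_of_mem_cap {P : Set E3} {p p' : E3} (hp : p ∈ cap P) (hp' : p' ∈ P)
    (h : projXY p' = projXY p) : p' 2 ≤ p 2 := by
  obtain ⟨n, hn, hpn⟩ := exists_mem_supportFace_of_mem_cap hp
  have : (p' 2 - p 2) * ⟪n, e3⟫ ≤ 0 := by
    rw [← real_inner_smul_right, ← sub_eq_smul_e3_of_projXY_eq h, inner_sub_right]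
    linarith [hpn.2 p' hp']
  linarith [nonpos_of_mul_nonpos_left this hn]

theorem injOn_projXY_cap (P : Set E3) : InjOn projXY (cap P) := fun p hp p' hp' h => by
  have h₁ := apply_two_le_of_mem_cap hp (cap_subset P hp') h.symm
  have h₂ := apply_two_le_of_mem_cap hp' (cap_subset P hp) h
  rw [← sub_eq_zero, sub_eq_smul_e3_of_projXY_eq h, le_antisymm h₂ h₁, sub_self, zero_smul]

theorem mem_cap_of_forall_apply_two_le {S : Finset E3} {p q : E3}
    (hq : q ∈ interior (convexHull ℝ (S : Set E3))) (hp : p ∈ convexHull ℝ (S : Set E3))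
    (hpq : projXY p = projXY q)
    (htop : ∀ r ∈ convexHull ℝ (S : Set E3), projXY r = projXY q → r 2 ≤ p 2) :
    p ∈ cap (convexHull ℝ (S : Set E3)) := by
  have hS : affineSpan ℝ (S : Set E3) = ⊤ := affineSpan_eq_top_of_nonempty_interior ⟨q, hq⟩
  have hpi : p ∉ interior (convexHull ℝ (S : Set E3)) := fun hpi => by
    obtain ⟨δ, hδ, hδP⟩ := exists_pos_add_smul_mem_of_mem_interior hpi e3
    have := htop _ hδP (by rw [projXY_add_smul_e3, hpq])
    rw [add_smul_e3_apply_two] at this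
    linarith
  obtain ⟨m, hm, hpm⟩ := exists_ne_zero_mem_supportFace (convex_convexHull ℝ _) ⟨q, hq⟩ hp hpi
  obtain ⟨n, hn, hpn, hrank⟩ := exists_finrank_vectorSpan_supportFace_add_one_eq hS hm hpm
  -- `q` lies strictly below `p` on a vertical line, so every supporting normal at `p` points up
  have hup : 0 < ⟪n, e3⟫ := by
    have hpq' : ⟪n, p - q⟫ = (p 2 - q 2) * ⟪n, e3⟫ := by
      rw [sub_eq_smul_e3_of_projXY_eq hpq, real_inner_smul_right]
    refine pos_of_mul_pos_right ?_ (sub_nonneg.2 (htop q (interior_subset hq) rfl))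
    rw [← hpq', inner_sub_right]
    linarith [inner_lt_of_mem_interior_of_mem_supportFace hn hpn hq]
  rw [finrank_euclideanSpace_fin] at hrank
  refine ⟨_, _, isFacetNormal_supportFace hn hpn (by omega), ?_, hpn⟩
  rw [real_inner_smul_left]
  positivity

theorem projXY_image_cap {S : Finset E3}
    (hint : (interior (convexHull ℝ (S : Set E3))).Nonempty) :
    projXY '' cap (convexHull ℝ (S : Set E3)) = projXY '' convexHull ℝ (S : Set E3) := by
  set P := convexHull ℝ (S : Set E3)
  have hPc : IsCompact P := S.finite_toSet.isCompact_convexHull ℝ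
  refine (image_mono (cap_subset P)).antisymm ?_
  have hinterior : projXY '' interior P ⊆ projXY '' cap P := by
    rintro _ ⟨q, hq, rfl⟩
    have hfiber : IsCompact (P ∩ projXY ⁻¹' {projXY q}) :=
      hPc.inter_right (isClosed_singleton.preimage continuous_projXY)
    obtain ⟨p, ⟨hpP, hpq⟩, hmax⟩ := hfiber.exists_isMaxOn ⟨q, interior_subset hq, rfl⟩
      (continuous_apply 2 |>.comp (PiLp.continuous_ofLp 2 _)).continuousOn
    exact ⟨p, mem_cap_of_forall_apply_two_le hq hpP hpq fun r hr hrq => hmax ⟨hr, hrq⟩, hpq⟩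
  calc projXY '' P ⊆ projXY '' closure (interior P) := by
        rw [(convex_convexHull ℝ _).closure_interior_eq_closure_of_nonempty_interior hint]
        exact image_mono subset_closure
    _ ⊆ closure (projXY '' interior P) := image_closure_subset_closure_image continuous_projXY
    _ ⊆ closure (projXY '' cap P) := closure_mono hinterior
    _ = projXY '' cap P := ((isCompact_cap S).image continuous_projXY).isClosed.closure_eq

theorem stmt4_general (P : Set E3) (hP : IsPolytope P) (hint : (interior P).Nonempty) :
    Nonempty ((cap P) ≃ₜ (Metric.closedBall (0 : E2) 1)) := by
  obtain ⟨S, rfl⟩ := hP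
  have hPc : IsCompact (convexHull ℝ (S : Set E3)) := S.finite_toSet.isCompact_convexHull ℝ
  obtain ⟨e₁⟩ := (isCompact_cap S).nonempty_homeomorph_image continuous_projXY.continuousOn
    (injOn_projXY_cap _)
  rw [projXY_image_cap hint] at e₁
  have hint' : (interior (projXY '' convexHull ℝ (S : Set E3))).Nonempty :=
    (hint.image projXY).mono
      (interior_maximal (image_mono interior_subset) (isOpenMap_projXY _ isOpen_interior))
  obtain ⟨e₂⟩ := nonempty_homeomorph_closedBall_of_convex
    ((convex_convexHull ℝ _).linear_image projXYₗ) hint'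
    (hPc.image continuous_projXY).isClosed (hPc.image continuous_projXY).isBounded
  exact ⟨e₁.trans e₂⟩

/-- The jagged convex cap (φ = 90°) of a convex polytope is homeomorphic to a
closed disk. -/
theorem stmt4 (P : Set E3) (hP : IsPolytope P) (hint : (interior P).Nonempty)
    (hne : (cap P).Nonempty) :
    Nonempty ((cap P) ≃ₜ (Metric.closedBall (0 : E2) 1)) :=
  stmt4_general P hP hint
end
end

section
/- Let Q be an unbounded, line-free closed convex polyhedron in ℝ³ and let V = rec(Q) be its recession cone (Alexandrov's limit angle). Then the spherical image of Q equals the spherical image of V: the set of outward unit normals of supporting planes of Q coincides with the set of outward unit normals of supporting planes of V at its apex. -/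
open scoped RealInnerProductSpace

noncomputable section

/-
If `n` supports `Q` at `x`, then `x + v ∈ Q` for every recession direction `v`, so `n` supports the
recession cone `V` at its apex. Conversely, `n` supports the cone `V` only if `⟪n, ·⟫ ≤ 0` on `V`,
and a linear functional that does not increase along any recession direction attains its maximum
on a nonempty polyhedron; `n` supports `Q` at a maximiser. Attainment goes by induction on
dimension: if `⟪n, ·⟫` is not constant on the polyhedron, take a direction `w` in its span along
which it increases; the ray from any point in direction `w` leaves the polyhedron through a face
`⟪a, x⟫ = b` of smaller dimension, so every point is dominated by a point of one of finitely many
such faces, on each of which the maximum is attained.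
-/

open Module

theorem exists_isMaxOn_of_forall_le_of_finset {α ι β : Type*} [LinearOrder β] {f : α → β}
    {P : Set α} {F : ι → Set α} {T : Finset ι} (hFP : ∀ i ∈ T, F i ⊆ P)
    (hF : ∀ i ∈ T, ∃ x ∈ F i, IsMaxOn f (F i) x)
    (hdom : ∀ y ∈ P, ∃ i ∈ T, ∃ y' ∈ F i, f y ≤ f y') (hP : P.Nonempty) :
    ∃ x ∈ P, IsMaxOn f P x := by
  have : Nonempty α := ⟨hP.some⟩
  choose! x hxF hxmax using hF
  have hT : T.Nonempty := by
    obtain ⟨y, hy⟩ := hP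
    obtain ⟨i, hi, -⟩ := hdom y hy
    exact ⟨i, hi⟩
  obtain ⟨j, hjT, hj⟩ := T.exists_max_image (f ∘ x) hT
  refine ⟨x j, hFP j hjT (hxF j hjT), fun y hy => ?_⟩
  obtain ⟨i, hiT, y', hy', hle⟩ := hdom y hy
  exact hle.trans ((hxmax i hiT hy').trans (hj i hiT))

section Polyhedron

open scoped Classical

variable {E : Type*} [NormedAddCommGroup E] [InnerProductSpace ℝ E]

def polyhedronOf (s : Finset (E × ℝ)) : Set E := ⋂ p ∈ s, {x | ⟪p.1, x⟫ ≤ p.2}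

theorem mem_polyhedronOf {s : Finset (E × ℝ)} {x : E} :
    x ∈ polyhedronOf s ↔ ∀ p ∈ s, ⟪p.1, x⟫ ≤ p.2 := by
  simp [polyhedronOf]

theorem mem_polyhedronOf_insert_neg {s : Finset (E × ℝ)} {p : E × ℝ} (hp : p ∈ s) {x : E} :
    x ∈ polyhedronOf (insert (-p) s) ↔ x ∈ polyhedronOf s ∧ ⟪p.1, x⟫ = p.2 := by
  simp only [mem_polyhedronOf, Finset.forall_mem_insert, Prod.fst_neg, Prod.snd_neg,
    inner_neg_left, neg_le_neg_iff]
  exact ⟨fun ⟨hge, hx⟩ => ⟨hx, le_antisymm (hx p hp) hge⟩, fun ⟨hx, heq⟩ => ⟨heq.ge, hx⟩⟩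

theorem polyhedronOf_insert_neg_subset {s : Finset (E × ℝ)} {p : E × ℝ} (hp : p ∈ s) :
    polyhedronOf (insert (-p) s) ⊆ polyhedronOf s :=
  fun _ hx => ((mem_polyhedronOf_insert_neg hp).mp hx).1

theorem exists_add_smul_mem_polyhedronOf_insert_neg {s : Finset (E × ℝ)} {w y : E}
    (hw : ∃ p ∈ s, 0 < ⟪p.1, w⟫) (hy : y ∈ polyhedronOf s) :
    ∃ p ∈ s, 0 < ⟪p.1, w⟫ ∧ ∃ t : ℝ, 0 ≤ t ∧ y + t • w ∈ polyhedronOf (insert (-p) s) := by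
  set J := s.filter fun p => 0 < ⟪p.1, w⟫
  have hJ : J.Nonempty := by
    obtain ⟨p, hps, hpw⟩ := hw
    exact ⟨p, Finset.mem_filter.mpr ⟨hps, hpw⟩⟩
  -- the exit time through constraint `p` is `(p.2 - ⟪p.1, y⟫) / ⟪p.1, w⟫`; take the first one
  obtain ⟨q, hqJ, hqmin⟩ := J.exists_min_image (fun p => (p.2 - ⟪p.1, y⟫) / ⟪p.1, w⟫) hJ
  obtain ⟨hqs, hqw⟩ := Finset.mem_filter.mp hqJ
  have hexp : ∀ (p : E × ℝ) (t : ℝ), ⟪p.1, y + t • w⟫ = ⟪p.1, y⟫ + t * ⟪p.1, w⟫ := fun p t => by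
    rw [inner_add_right, real_inner_smul_right]
  set t := (q.2 - ⟪q.1, y⟫) / ⟪q.1, w⟫
  have ht : 0 ≤ t := div_nonneg (sub_nonneg.mpr (mem_polyhedronOf.mp hy q hqs)) hqw.le
  refine ⟨q, hqs, hqw, t, ht, (mem_polyhedronOf_insert_neg hqs).mpr ⟨?_, ?_⟩⟩
  · refine mem_polyhedronOf.mpr fun p hp => ?_
    rw [hexp]
    have hpy := mem_polyhedronOf.mp hy p hp
    by_cases hpw : 0 < ⟪p.1, w⟫
    · have := (le_div_iff₀ hpw).mp (hqmin p (Finset.mem_filter.mpr ⟨hp, hpw⟩))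
      linarith
    · nlinarith
  · rw [hexp, div_mul_cancel₀ _ hqw.ne']
    ring

theorem finrank_vectorSpan_polyhedronOf_insert_neg_lt [FiniteDimensional ℝ E]
    {s : Finset (E × ℝ)} {p : E × ℝ} (hp : p ∈ s) {w : E}
    (hw : w ∈ vectorSpan ℝ (polyhedronOf s)) (hpw : 0 < ⟪p.1, w⟫) :
    finrank ℝ (vectorSpan ℝ (polyhedronOf (insert (-p) s))) <
      finrank ℝ (vectorSpan ℝ (polyhedronOf s)) := by
  have hface : vectorSpan ℝ (polyhedronOf (insert (-p) s)) ≤ (ℝ ∙ p.1)ᗮ := by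
    rw [vectorSpan_def, Submodule.span_le]
    rintro _ ⟨a, ha, b, hb, rfl⟩
    simp only [SetLike.mem_coe, Submodule.mem_orthogonal_singleton_iff_inner_right, vsub_eq_sub,
      inner_sub_right, ((mem_polyhedronOf_insert_neg hp).mp ha).2,
      ((mem_polyhedronOf_insert_neg hp).mp hb).2, sub_self]
  refine Submodule.finrank_lt_finrank_of_lt (SetLike.lt_iff_le_and_exists.mpr
    ⟨vectorSpan_mono ℝ (polyhedronOf_insert_neg_subset hp), w, hw, fun hw' => ?_⟩)
  exact hpw.ne' (Submodule.mem_orthogonal_singleton_iff_inner_right.mp (hface hw'))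

theorem exists_isMaxOn_inner_polyhedronOf [FiniteDimensional ℝ E] {s : Finset (E × ℝ)} {n : E}
    (hne : (polyhedronOf s).Nonempty) (hrec : ∀ u, (∀ p ∈ s, ⟪p.1, u⟫ ≤ 0) → ⟪n, u⟫ ≤ 0) :
    ∃ x ∈ polyhedronOf s, IsMaxOn (⟪n, ·⟫) (polyhedronOf s) x := by
  induction hm : finrank ℝ (vectorSpan ℝ (polyhedronOf s)) using Nat.strong_induction_on
    generalizing s with
  | _ m IH =>
  by_cases hconst : ∀ y ∈ polyhedronOf s, ∀ z ∈ polyhedronOf s, ⟪n, y⟫ ≤ ⟪n, z⟫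
  · obtain ⟨x, hx⟩ := hne
    exact ⟨x, hx, fun y hy => hconst y hy x hx⟩
  push Not at hconst
  obtain ⟨y, hy, z, hz, hzy⟩ := hconst
  have hw : y - z ∈ vectorSpan ℝ (polyhedronOf s) := vsub_mem_vectorSpan ℝ hy hz
  have hnw : 0 < ⟪n, y - z⟫ := by rw [inner_sub_right]; linarith
  have hexit : ∃ p ∈ s, 0 < ⟪p.1, y - z⟫ := by
    by_contra! h
    exact (hrec _ h).not_gt hnw
  let T := s.filter fun p => 0 < ⟪p.1, y - z⟫ ∧ (polyhedronOf (insert (-p) s)).Nonempty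
  refine exists_isMaxOn_of_forall_le_of_finset (F := fun p => polyhedronOf (insert (-p) s)) (T := T)
    (fun p hp => polyhedronOf_insert_neg_subset (Finset.mem_filter.mp hp).1) ?_ ?_ hne
  · intro p hp
    obtain ⟨hps, hpw, hpne⟩ := Finset.mem_filter.mp hp
    exact IH _ (hm ▸ finrank_vectorSpan_polyhedronOf_insert_neg_lt hps hw hpw) hpne
      (fun u hu => hrec u fun q hq => hu q (Finset.mem_insert_of_mem hq)) rfl
  · intro x hx
    obtain ⟨p, hps, hpw, t, ht, hmem⟩ := exists_add_smul_mem_polyhedronOf_insert_neg hexit hx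
    refine ⟨p, Finset.mem_filter.mpr ⟨hps, hpw, _, hmem⟩, _, hmem, ?_⟩
    rw [inner_add_right, real_inner_smul_right]
    nlinarith

end Polyhedron

theorem zero_mem_recCone (Q : Set E3) : (0 : E3) ∈ recCone Q := by
  intro x hx t _
  simpa using hx

theorem add_mem_recCone {Q : Set E3} {u v : E3} (hu : u ∈ recCone Q) (hv : v ∈ recCone Q) :
    u + v ∈ recCone Q := by
  intro x hx t ht
  rw [smul_add, ← add_assoc]
  exact hv _ (hu x hx t ht) t ht

theorem mem_recCone_polyhedronOf {s : Finset (E3 × ℝ)} {u : E3}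
    (hu : ∀ p ∈ s, ⟪p.1, u⟫ ≤ 0) : u ∈ recCone (polyhedronOf s) := by
  intro x hx t ht
  refine mem_polyhedronOf.mpr fun p hp => ?_
  rw [inner_add_right, real_inner_smul_right]
  nlinarith [mem_polyhedronOf.mp hx p hp, hu p hp]

theorem sphImage_subset_sphImage_recCone (Q : Set E3) : sphImage Q ⊆ sphImage (recCone Q) := by
  rintro n ⟨hn, x, hx, hsupp⟩
  refine ⟨hn, 0, zero_mem_recCone Q, fun v hv => ?_⟩
  simpa using hsupp (x + v) (by simpa using hv x hx 1 zero_le_one)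

theorem inner_nonpos_of_mem_sphImage_recCone {Q : Set E3} {n u : E3}
    (hn : n ∈ sphImage (recCone Q)) (hu : u ∈ recCone Q) : ⟪n, u⟫ ≤ 0 := by
  obtain ⟨-, v, hv, hsupp⟩ := hn
  simpa using hsupp (v + u) (add_mem_recCone hv hu)

theorem sphImage_recCone_subset_sphImage_polyhedronOf {s : Finset (E3 × ℝ)}
    (hne : (polyhedronOf s).Nonempty) :
    sphImage (recCone (polyhedronOf s)) ⊆ sphImage (polyhedronOf s) := by
  intro n hn
  obtain ⟨x, hx, hmax⟩ := exists_isMaxOn_inner_polyhedronOf hne fun u hu =>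
    inner_nonpos_of_mem_sphImage_recCone hn (mem_recCone_polyhedronOf hu)
  exact ⟨hn.1, x, hx, fun y hy => by
    rw [inner_sub_right]; exact sub_nonpos.mpr (hmax hy)⟩

theorem stmt13_general (Q : Set E3) (hpoly : IsPolyhedron Q)
    (hint : (interior Q).Nonempty) :
    sphImage Q = sphImage (recCone Q) := by
  obtain ⟨s, hs⟩ := hpoly
  change Q = polyhedronOf s at hs
  subst hs
  exact (sphImage_subset_sphImage_recCone _).antisymm
    (sphImage_recCone_subset_sphImage_polyhedronOf (hint.mono interior_subset))

/-- The spherical image of an unbounded line-free convex polyhedron coincides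
with the spherical image of its limit angle (recession cone). -/
theorem stmt13 (Q : Set E3) (hpoly : IsPolyhedron Q)
    (hunb : ¬ Bornology.IsBounded Q) (hint : (interior Q).Nonempty)
    (hline : ¬ ContainsLine Q) :
    sphImage Q = sphImage (recCone Q) :=
  stmt13_general Q hpoly hint
end
end
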